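/- arXiv:1809.00867 — 2 statements merged into one kernel-verified Lean document; each statement's English description precedes it below -/
import Mathlib

section
/- Let R be a commutative algebra over a commutative ring k of characteristic p > 0, and let D : R → R be a k-linear derivation. Then the p-fold composite D^p (composition of D with itself p times, as a k-linear map) is again a k-linear derivation of R. -/
open Finset

lemma iterate_leibniz {k R : Type*} [CommRing k] [CommRing R] [Algebra k R]
    (D : Derivation k R R) (a b : R) (n : ℕ) :
    (⇑D)^[n] (a * b) =
      ∑ i ∈ range (n + 1), n.choose i • ((⇑D)^[i] a * (⇑D)^[n - i] b) := by
  induction n with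
  | zero => simp
  | succ n ih =>
    rw [Function.iterate_succ_apply', ih, map_sum]
    have h1 : ∀ i ∈ range (n + 1),
        D (n.choose i • ((⇑D)^[i] a * (⇑D)^[n - i] b)) =
          n.choose i • ((⇑D)^[i + 1] a * (⇑D)^[n - i] b)
            + n.choose i • ((⇑D)^[i] a * (⇑D)^[n - i + 1] b) := by
      intro i _
      have e1 : D ((⇑D)^[n - i] b) = (⇑D)^[n - i + 1] b :=
        (Function.iterate_succ_apply' D (n - i) b).symm
      have e2 : D ((⇑D)^[i] a) = (⇑D)^[i + 1] a :=
        (Function.iterate_succ_apply' D i a).symm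
      rw [map_nsmul, Derivation.leibniz, smul_eq_mul, smul_eq_mul, e1, e2, smul_add,
        mul_comm ((⇑D)^[n - i] b), add_comm]
    rw [sum_congr rfl h1, sum_add_distrib]
    have h2 : ∀ i ∈ range (n + 1),
        n.choose i • ((⇑D)^[i] a * (⇑D)^[n - i + 1] b)
          = n.choose i • ((⇑D)^[i] a * (⇑D)^[n + 1 - i] b) := by
      intro i hi
      rw [Nat.sub_add_comm (Nat.lt_succ_iff.mp (mem_range.mp hi))]
    rw [sum_congr rfl h2]
    rw [Finset.sum_range_succ' (fun i => (n+1).choose i • ((⇑D)^[i] a * (⇑D)^[n + 1 - i] b))]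
    have h3 : ∀ i ∈ range (n + 1),
        (n + 1).choose (i + 1) • ((⇑D)^[i + 1] a * (⇑D)^[n + 1 - (i + 1)] b)
          = n.choose i • ((⇑D)^[i + 1] a * (⇑D)^[n - i] b)
            + n.choose (i + 1) • ((⇑D)^[i + 1] a * (⇑D)^[n - i] b) := by
      intro i _
      rw [Nat.choose_succ_succ, add_smul]
      congr 2 <;> simp [Nat.succ_sub_succ]
    rw [sum_congr rfl h3, sum_add_distrib]
    have h4 : ∑ i ∈ range (n + 1), n.choose (i + 1) • ((⇑D)^[i + 1] a * (⇑D)^[n - i] b)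
        = ∑ i ∈ range (n + 1), n.choose i • ((⇑D)^[i] a * (⇑D)^[n + 1 - i] b)
          - n.choose 0 • ((⇑D)^[0] a * (⇑D)^[n + 1 - 0] b) := by
      have key := Finset.sum_range_succ' (fun i => n.choose i • ((⇑D)^[i] a * (⇑D)^[n + 1 - i] b)) (n + 1)
      have h5 : ∀ i ∈ range (n + 1),
          n.choose (i + 1) • ((⇑D)^[i + 1] a * (⇑D)^[n + 1 - (i + 1)] b)
            = n.choose (i + 1) • ((⇑D)^[i + 1] a * (⇑D)^[n - i] b) := by
        intro i _; simp [Nat.succ_sub_succ]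
      rw [Finset.sum_range_succ (fun i => n.choose i • ((⇑D)^[i] a * (⇑D)^[n + 1 - i] b)) (n + 1)] at key
      simp only [Nat.choose_succ_self, zero_smul, add_zero] at key
      rw [eq_sub_iff_add_eq, ← sum_congr rfl h5, ← key]
    rw [h4]
    simp only [Nat.choose_zero_right, Function.iterate_zero_apply, Nat.sub_zero, one_smul]
    abel

/-- If `R` is a commutative algebra over a commutative ring `k` of characteristic `p > 0`
and `D : R → R` is a `k`-linear derivation, then the `p`-fold composite `D^p`
(as a `k`-linear endomorphism) is again a `k`-linear derivation of `R`. -/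
theorem derivation_pow_char_is_derivation
    (k R : Type*) [CommRing k] [CommRing R] [Algebra k R]
    (p : ℕ) [Fact p.Prime] [CharP k p]
    (D : Derivation k R R) :
    ∃ E : Derivation k R R, (E : R →ₗ[k] R) = (D : R →ₗ[k] R) ^ p := by
  have hp : (p : R) = 0 := by
    rw [← map_natCast (algebraMap k R), CharP.cast_eq_zero, map_zero]
  have hpow : ∀ x : R, ((D : R →ₗ[k] R) ^ p) x = (⇑D)^[p] x := fun x => by
    rw [Module.End.pow_apply]; rfl
  have hpprime := (Fact.out : p.Prime)
  have hmid : ∀ i : ℕ, 0 < i → i < p → ∀ x : R, p.choose i • x = 0 := by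
    intro i h1 h2 x
    obtain ⟨m, hm⟩ := hpprime.dvd_choose_self h1.ne' h2
    rw [hm, mul_smul, ← Nat.cast_smul_eq_nsmul R p, hp, zero_smul]
  have key : ∀ a b : R, (⇑D)^[p] (a * b) = a * (⇑D)^[p] b + b * (⇑D)^[p] a := by
    intro a b
    obtain ⟨m, hm⟩ := Nat.exists_eq_succ_of_ne_zero hpprime.ne_zero
    rw [iterate_leibniz, Finset.sum_range_succ, hm,
      Finset.sum_range_succ' (fun i => (m + 1).choose i • ((⇑D)^[i] a * (⇑D)^[m + 1 - i] b)) m]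
    have hz : ∑ i ∈ range m,
        (m + 1).choose (i + 1) • ((⇑D)^[i + 1] a * (⇑D)^[m + 1 - (i + 1)] b) = 0 := by
      refine Finset.sum_eq_zero fun i hi => ?_
      have him := mem_range.mp hi
      have e : m + 1 = p := by omega
      rw [e]
      exact hmid (i + 1) i.succ_pos (by omega) _
    rw [hz]
    simp only [Nat.choose_zero_right, Nat.choose_self, Function.iterate_zero_apply,
      Nat.sub_zero, Nat.sub_self, one_smul, zero_add, mul_one]
    simp only [Nat.succ_eq_add_one]; ring
  refine ⟨{ toLinearMap := (D : R →ₗ[k] R) ^ p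
            map_one_eq_zero' := ?_
            leibniz' := ?_ }, rfl⟩
  · show ((D : R →ₗ[k] R) ^ p) 1 = 0
    rw [hpow]
    obtain ⟨m, hm⟩ := Nat.exists_eq_succ_of_ne_zero hpprime.ne_zero
    rw [hm, Function.iterate_succ_apply, D.map_one_eq_zero, Function.iterate_fixed (map_zero D)]
  · intro a b
    show ((D : R →ₗ[k] R) ^ p) (a * b) = a • ((D : R →ₗ[k] R) ^ p) b + b • ((D : R →ₗ[k] R) ^ p) a
    simp only [hpow, smul_eq_mul]
    exact key a b
end

section
/- Let K be a field containing k, with char k = p > 0, and let D be a nonzero k-linear derivation of K that is p-closed, i.e. D^p = α • D for some α ∈ K^D (where D^p is the p-fold composite of D). Then the field extension K / K^D is purely inseparable of degree p, i.e. [K : K^D] = p. -/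
/-- The constant field `K^D` of a `k`-linear derivation `D` of a field `K`,
i.e. the subfield `{x ∈ K | D x = 0}`. -/
def constantField (k K : Type*) [Field k] [Field K] [Algebra k K]
    (D : Derivation k K K) : Subfield K where
  carrier := {x : K | D x = 0}
  one_mem' := D.map_one_eq_zero
  mul_mem' := by
    intro a b ha hb
    simp only [Set.mem_setOf_eq] at *
    rw [D.leibniz, ha, hb, smul_zero, smul_zero, add_zero]
  zero_mem' := D.map_zero
  add_mem' := by
    intro a b ha hb
    simp only [Set.mem_setOf_eq] at *
    rw [map_add, ha, hb, add_zero]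
  neg_mem' := by
    intro a ha
    simp only [Set.mem_setOf_eq] at *
    rw [map_neg, ha, neg_zero]
  inv_mem' := by
    intro a ha
    simp only [Set.mem_setOf_eq] at *
    rw [D.leibniz_inv, ha, smul_zero]

/-!
For `a` with `D a ≠ 0`, `a ^ p` is a constant but `a` is not, so the minimal polynomial of `a`
over `K^D` is `X ^ p - a ^ p` and `[K : K^D] ≥ p`. Conversely, for `x₀, …, x_p ∈ K` the
`p × (p + 1)` matrix `(D^i x_j)` has a nonzero kernel vector, and `D^p = α • D` makes its kernel
stable under applying `D` to each coordinate. A kernel vector of minimal support with one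
coordinate equal to `1` is then killed by `D`, and its row `0` is a `K^D`-linear relation among
the `x_j`; hence `[K : K^D] ≤ p`.
-/

open Finset Matrix

namespace Derivation

variable {R K ι : Type*} [CommRing R] [Field K] [Algebra R K] [Fintype ι]

theorem exists_ne_zero_mem_forall_eq_zero_of_map_mem {D : Derivation R K K}
    {W : Submodule K (ι → K)} (hW : ∀ g ∈ W, (fun j => D (g j)) ∈ W) {g : ι → K}
    (hgW : g ∈ W) (hg : g ≠ 0) :
    ∃ c ∈ W, c ≠ 0 ∧ ∀ j, D (c j) = 0 := by
  classical
  induction hn : #{j | g j ≠ 0} using Nat.strong_induction_on generalizing g with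
  | _ n ih =>
  obtain ⟨j₀, hj₀⟩ := Function.ne_iff.mp hg
  set h := (g j₀)⁻¹ • g
  have hhW : h ∈ W := W.smul_mem _ hgW
  have hh₀ : h j₀ = 1 := inv_mul_cancel₀ hj₀
  have hh : h ≠ 0 := fun h0 => one_ne_zero (hh₀ ▸ congrFun h0 j₀)
  by_cases hDh : (fun j => D (h j)) = 0
  · exact ⟨h, hhW, hh, congrFun hDh⟩
  -- Normalizing one coordinate to `1` makes the support of `D h` strictly smaller.
  refine ih _ ?_ (hW h hhW) hDh rfl
  rw [← hn]
  refine card_lt_card ⟨fun j hj => ?_, fun hsub => ?_⟩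
  · simp only [mem_filter, mem_univ, true_and] at hj ⊢
    intro hgj
    exact hj (by simp [h, hgj])
  · exact absurd (hsub (by simpa using hj₀)) (by simp [hh₀])

def wronskiMatrix (D : Derivation R K K) (n : ℕ) (x : ι → K) : Matrix (Fin n) ι K :=
  Matrix.of fun i j => (⇑D)^[i] (x j)

theorem wronskiMatrix_mulVec_apply (D : Derivation R K K) {n : ℕ} (x g : ι → K) (i : Fin n) :
    (D.wronskiMatrix n x *ᵥ g) i = ∑ j, (⇑D)^[i] (x j) * g j := rfl

theorem wronskiMatrix_mulVec_map_eq_zero {D : Derivation R K K} {n : ℕ} (hn : 1 < n) {α : K}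
    (hD : ∀ y, (⇑D)^[n] y = α * D y) {x g : ι → K} (hg : D.wronskiMatrix n x *ᵥ g = 0) :
    D.wronskiMatrix n x *ᵥ (fun j => D (g j)) = 0 := by
  set row : ℕ → K := fun i => ∑ j, (⇑D)^[i] (x j) * g j
  have hrow_lt : ∀ i < n, row i = 0 := fun i hi => congrFun hg ⟨i, hi⟩
  -- Row `n` is `α` times row `1`.
  have hrow : ∀ i ≤ n, row i = 0 := by
    intro i hi
    rcases hi.lt_or_eq with hi | rfl
    · exact hrow_lt i hi
    · simp only [row, hD, mul_assoc, ← mul_sum]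
      rw [show ∑ j, D (x j) * g j = row 1 by simp [row], hrow_lt 1 hn, mul_zero]
  ext i
  have hleib : D (row i) = row (i + 1) + (D.wronskiMatrix n x *ᵥ fun j => D (g j)) i := by
    simp only [row, map_sum, leibniz, smul_eq_mul, wronskiMatrix_mulVec_apply,
      Function.iterate_succ_apply', ← sum_add_distrib]
    exact sum_congr rfl fun j _ => by ring
  rw [hrow i i.2.le, hrow (i + 1) i.2, map_zero, zero_add] at hleib
  exact hleib.symm

theorem exists_ne_zero_wronskiMatrix_mulVec_eq_zero (D : Derivation R K K) {n : ℕ} (x : ι → K)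
    (hι : n < Fintype.card ι) : ∃ g, g ≠ 0 ∧ D.wronskiMatrix n x *ᵥ g = 0 := by
  have hker := LinearMap.ker_ne_bot_of_finrank_lt (f := (D.wronskiMatrix n x).mulVecLin)
    (by simpa using hι)
  obtain ⟨g, hg, hg0⟩ := (Submodule.ne_bot_iff _).mp hker
  exact ⟨g, hg0, hg⟩

theorem exists_sum_mul_eq_zero_of_iterate_eq_mul (D : Derivation R K K) {n : ℕ} (hn : 1 < n)
    {α : K} (hD : ∀ y, (⇑D)^[n] y = α * D y) (x : ι → K) (hι : n < Fintype.card ι) :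
    ∃ c : ι → K, c ≠ 0 ∧ (∀ j, D (c j) = 0) ∧ ∑ j, c j * x j = 0 := by
  obtain ⟨g, hg0, hg⟩ := D.exists_ne_zero_wronskiMatrix_mulVec_eq_zero x hι
  obtain ⟨c, hcW, hc0, hc⟩ := exists_ne_zero_mem_forall_eq_zero_of_map_mem
    (W := LinearMap.ker (D.wronskiMatrix n x).mulVecLin)
    (fun g hg => wronskiMatrix_mulVec_map_eq_zero hn hD hg) hg hg0
  have hrow₀ := congrFun (LinearMap.mem_ker.mp hcW) ⟨0, by omega⟩
  refine ⟨c, hc0, hc, ?_⟩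
  simpa [wronskiMatrix_mulVec_apply, mul_comm] using hrow₀

end Derivation

section

variable {k K : Type*} [Field k] [Field K] [Algebra k K]

@[simp]
theorem mem_constantField {D : Derivation k K K} {x : K} : x ∈ constantField k K D ↔ D x = 0 :=
  Iff.rfl

theorem pow_char_mem_constantField (D : Derivation k K K) (p : ℕ) [CharP K p] (a : K) :
    a ^ p ∈ constantField k K D := by
  simp [D.leibniz_pow]

theorem rank_constantField_le (D : Derivation k K K) {n : ℕ} (hn : 1 < n) {α : K}
    (hD : ∀ y, (⇑D)^[n] y = α * D y) : Module.rank (constantField k K D) K ≤ n := by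
  refine rank_le fun s hs => ?_
  by_contra! hs_card
  obtain ⟨c, hc0, hc, hsum⟩ :=
    D.exists_sum_mul_eq_zero_of_iterate_eq_mul hn hD ((↑) : s → K) (by simpa using hs_card)
  have := Fintype.linearIndependent_iff.mp hs (fun x => ⟨c x, hc x⟩) hsum
  exact hc0 (funext fun x => congrArg Subtype.val (this x))

end

open Polynomial in
theorem minpoly_eq_X_pow_sub_C_of_notMem_range {F K : Type*} [Field F] [Field K] [Algebra F K]
    (p : ℕ) [Fact p.Prime] [CharP K p] {a : K} (ha : a ∉ Set.range (algebraMap F K)) {c : F}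
    (hc : algebraMap F K c = a ^ p) : minpoly F a = X ^ p - C c := by
  have hirr : Irreducible (X ^ p - C c) :=
    X_pow_sub_C_irreducible_of_prime Fact.out fun b hb =>
      ha ⟨b, frobenius_inj K p (by rw [frobenius_def, frobenius_def, ← map_pow, hb, hc])⟩
  refine (minpoly.eq_of_irreducible_of_monic hirr ?_ (monic_X_pow_sub_C c (NeZero.ne p))).symm
  simp [hc]

theorem finrank_constantField_of_pClosed_general
    (k K : Type*) [Field k] [Field K] [Algebra k K]
    (p : ℕ) [Fact p.Prime] [CharP k p]
    (D : Derivation k K K) (hD : D ≠ 0)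
    (α : K)
    (hclosed : (D : K →ₗ[k] K) ^ p = α • (D : K →ₗ[k] K)) :
    Module.finrank (constantField k K D) K = p := by
  have hp : p.Prime := Fact.out
  have : CharP K p := charP_of_injective_algebraMap (algebraMap k K).injective p
  have hDp : ∀ y, (⇑D)^[p] y = α * D y := fun y => by
    simpa [Module.End.pow_apply] using LinearMap.congr_fun hclosed y
  have hrank := rank_constantField_le D hp.one_lt hDp
  have : FiniteDimensional (constantField k K D) K :=
    Module.rank_lt_aleph0_iff.mp (hrank.trans_lt Cardinal.natCast_lt_aleph0)
  obtain ⟨a, ha⟩ : ∃ a, D a ≠ 0 := by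
    by_contra! h
    exact hD (Derivation.ext h)
  have hmin : minpoly (constantField k K D) a =
      .X ^ p - .C ⟨a ^ p, pow_char_mem_constantField D p a⟩ :=
    minpoly_eq_X_pow_sub_C_of_notMem_range p (fun ⟨b, hb⟩ => ha (hb ▸ b.2)) rfl
  refine le_antisymm (Module.finrank_le_of_rank_le hrank) ?_
  calc p = (minpoly (constantField k K D) a).natDegree := by
        rw [hmin, Polynomial.natDegree_X_pow_sub_C]
    _ ≤ _ := minpoly.natDegree_le a

/-- If `D` is a nonzero `p`-closed `k`-linear derivation of a field `K` of
characteristic `p > 0`, i.e. `D^p = α • D` for some `α ∈ K^D`, then the field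
extension `K / K^D` is purely inseparable of degree `p`: `[K : K^D] = p`. -/
theorem finrank_constantField_of_pClosed
    (k K : Type*) [Field k] [Field K] [Algebra k K]
    (p : ℕ) [Fact p.Prime] [CharP k p]
    (D : Derivation k K K) (hD : D ≠ 0)
    (α : K) (hα : α ∈ constantField k K D)
    (hclosed : (D : K →ₗ[k] K) ^ p = α • (D : K →ₗ[k] K)) :
    Module.finrank (constantField k K D) K = p :=
  finrank_constantField_of_pClosed_general k K p D hD α hclosed
end
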